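/- Let L : ℝ^d → ℝ be differentiable, bounded below, with ℓ-Lipschitz gradient (ℓ > 0). Let γ > 0, M_g > 0, ε > 0, and let (η_t)_{t≥0} be positive step sizes with Σ_{t=0}^∞ η_t = ∞ and Σ_{t=0}^∞ η_t² < ∞. Let (G_t)_{t≥0} be symmetric positive definite matrices with ε ≤ λ_min(G_t⁻¹) and λ_max(G_t⁻¹) ≤ γ⁻¹ for all t, define θ_{t+1} := θ_t − η_t G_t⁻¹ ∇L(θ_t), and assume ‖∇L(θ_t)‖ ≤ M_g for all t. Then lim inf_{t→∞} ‖∇L(θ_t)‖² = 0. -/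

import Mathlib

open Matrix Filter

/-!
Since the spectrum of `G_t⁻¹` lies in `[ε, γ⁻¹]`, the step direction `u_t = G_t⁻¹ ∇L(θ_t)`
satisfies `⟪∇L(θ_t), u_t⟫ ≥ ε ‖∇L(θ_t)‖²` and `‖u_t‖ ≤ γ⁻¹ M_g`, so the descent lemma gives
`L(θ_{t+1}) ≤ L(θ_t) - ε η_t ‖∇L(θ_t)‖² + ℓ (γ⁻¹ M_g)² η_t²`. Telescoping against the lower
bound of `L`, with `∑ η_t² < ∞`, yields `∑ η_t ‖∇L(θ_t)‖² < ∞`; as `∑ η_t = ∞`, the gradients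
cannot stay bounded away from zero.
-/

namespace Matrix.IsHermitian

variable {n : Type*} [Fintype n] [DecidableEq n] {A : Matrix n n ℝ} (hA : A.IsHermitian)

theorem eigenvectorBasis_repr_toEuclideanLin (x : EuclideanSpace ℝ n) (i : n) :
    hA.eigenvectorBasis.repr (toEuclideanLin A x) i =
      hA.eigenvalues i * hA.eigenvectorBasis.repr x i := by
  have hAb : toEuclideanLin A (hA.eigenvectorBasis i) =
      hA.eigenvalues i • hA.eigenvectorBasis i := by
    ext1
    simpa [toLpLin_apply] using congr_fun (hA.mulVec_eigenvectorBasis i) _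
  rw [OrthonormalBasis.repr_apply_apply, OrthonormalBasis.repr_apply_apply,
    ← isSymmetric_toEuclideanLin_iff.mpr hA, hAb, real_inner_smul_left]

theorem mul_norm_sq_le_inner_toEuclideanLin {a : ℝ} (ha : ∀ i, a ≤ hA.eigenvalues i)
    (x : EuclideanSpace ℝ n) : a * ‖x‖ ^ 2 ≤ inner ℝ x (toEuclideanLin A x) := by
  set B := hA.eigenvectorBasis
  rw [← B.repr.inner_map_map, ← B.repr.norm_map, EuclideanSpace.norm_sq_eq, PiLp.inner_apply,
    Finset.mul_sum]
  refine Finset.sum_le_sum fun i _ => ?_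
  rw [hA.eigenvectorBasis_repr_toEuclideanLin, RCLike.inner_apply, conj_trivial,
    Real.norm_eq_abs, sq_abs]
  nlinarith [ha i, sq_nonneg (B.repr x i)]

theorem norm_toEuclideanLin_le {b : ℝ} (hb : 0 ≤ b) (hbA : ∀ i, |hA.eigenvalues i| ≤ b)
    (x : EuclideanSpace ℝ n) : ‖toEuclideanLin A x‖ ≤ b * ‖x‖ := by
  set B := hA.eigenvectorBasis
  refine (pow_le_pow_iff_left₀ (norm_nonneg _) (by positivity) two_ne_zero).mp ?_
  rw [mul_pow, ← B.repr.norm_map, ← B.repr.norm_map x, EuclideanSpace.norm_sq_eq,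
    EuclideanSpace.norm_sq_eq, Finset.mul_sum]
  refine Finset.sum_le_sum fun i _ => ?_
  rw [hA.eigenvectorBasis_repr_toEuclideanLin, norm_mul, mul_pow,
    Real.norm_eq_abs (hA.eigenvalues i)]
  gcongr
  exact hbA i

end Matrix.IsHermitian

section Descent

variable {E : Type*} [NormedAddCommGroup E] [InnerProductSpace ℝ E] [CompleteSpace E]

theorem le_add_inner_gradient_add_mul_norm_sq {f : E → ℝ} (hf : Differentiable ℝ f) {c : ℝ}
    (hc : 0 ≤ c) (hLip : ∀ x y, ‖gradient f x - gradient f y‖ ≤ c * ‖x - y‖) (x y : E) :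
    f y ≤ f x + inner ℝ (gradient f x) (y - x) + c * ‖y - x‖ ^ 2 := by
  let toDual := InnerProductSpace.toDual ℝ E
  have hderiv : ∀ z ∈ segment ℝ x y,
      ‖toDual (gradient f z) - toDual (gradient f x)‖ ≤ c * ‖y - x‖ := by
    intro z hz
    rw [← map_sub, LinearIsometryEquiv.norm_map]
    refine (hLip z x).trans (mul_le_mul_of_nonneg_left ?_ hc)
    exact norm_sub_le_of_mem_segment hz
  have hmvt := (convex_segment x y).norm_image_sub_le_of_norm_hasFDerivWithin_le'
    (fun z _ => (hf z).hasGradientAt.hasFDerivAt.hasFDerivWithinAt) hderiv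
    (left_mem_segment ℝ x y) (right_mem_segment ℝ x y)
  rw [InnerProductSpace.toDual_apply_apply] at hmvt
  have := (le_abs_self _).trans hmvt
  nlinarith

theorem apply_sub_smul_le_of_inner_gradient_ge {f : E → ℝ} (hf : Differentiable ℝ f) {c : ℝ}
    (hc : 0 ≤ c) (hLip : ∀ x y, ‖gradient f x - gradient f y‖ ≤ c * ‖x - y‖)
    {x u : E} {η ε B : ℝ} (hη : 0 ≤ η) (hu : ε * ‖gradient f x‖ ^ 2 ≤ inner ℝ (gradient f x) u)
    (huB : ‖u‖ ≤ B) :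
    f (x - η • u) ≤ f x - ε * (η * ‖gradient f x‖ ^ 2) + c * B ^ 2 * η ^ 2 := by
  have hdesc := le_add_inner_gradient_add_mul_norm_sq hf hc hLip x (x - η • u)
  rw [sub_sub_cancel_left, inner_neg_right, real_inner_smul_right, norm_neg, norm_smul,
    Real.norm_of_nonneg hη] at hdesc
  have hstep : (η * ‖u‖) ^ 2 ≤ B ^ 2 * η ^ 2 := by
    rw [mul_pow, mul_comm]
    gcongr
  nlinarith [mul_le_mul_of_nonneg_left hu hη, mul_le_mul_of_nonneg_left hstep hc]

end Descent

theorem summable_of_le_sub_add {f a b : ℕ → ℝ} (hf : BddBelow (Set.range f))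
    (ha : ∀ t, 0 ≤ a t) (hb : ∀ t, 0 ≤ b t) (hbs : Summable b)
    (hstep : ∀ t, f (t + 1) ≤ f t - a t + b t) : Summable a := by
  obtain ⟨m, hm⟩ := hf
  refine summable_of_sum_range_le ha (c := f 0 - m + ∑' t, b t) fun T => ?_
  calc ∑ t ∈ Finset.range T, a t
      ≤ ∑ t ∈ Finset.range T, (f t - f (t + 1) + b t) :=
        Finset.sum_le_sum fun t _ => by linarith [hstep t]
    _ = f 0 - f T + ∑ t ∈ Finset.range T, b t := by
        rw [Finset.sum_add_distrib, Finset.sum_range_sub']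
    _ ≤ f 0 - m + ∑' t, b t := by
        gcongr
        · exact hm (Set.mem_range_self T)
        · exact hbs.sum_le_tsum _ fun t _ => hb t

theorem liminf_eq_zero_of_summable_mul {η a : ℕ → ℝ} (hη : ∀ t, 0 ≤ η t) (hη_sum : ¬Summable η)
    (ha : ∀ t, 0 ≤ a t) (hs : Summable fun t => η t * a t) : liminf a atTop = 0 := by
  have hsmall : ∀ δ > 0, ∃ᶠ t in atTop, a t ≤ δ := by
    intro δ hδ
    by_contra hlarge
    have hs' := (summable_mul_left_iff (inv_ne_zero hδ.ne')).mpr hs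
    refine hη_sum (hs'.of_norm_bounded_eventually_nat ?_)
    filter_upwards [not_frequently.mp hlarge] with t ht
    rw [Real.norm_of_nonneg (hη t), le_inv_mul_iff₀ hδ, mul_comm]
    exact mul_le_mul_of_nonneg_left (not_le.mp ht).le (hη t)
  have hcobdd : IsCoboundedUnder (· ≥ ·) atTop a :=
    ⟨1, fun b hb => by
      obtain ⟨t, hbt, ht⟩ := (eventually_map.mp hb |>.and_frequently (hsmall 1 one_pos)).exists
      exact hbt.trans ht⟩
  refine le_antisymm (le_of_forall_pos_le_add fun δ hδ => ?_)
    (le_liminf_of_le hcobdd (.of_forall ha))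
  rw [zero_add]
  exact liminf_le_of_frequently_le (hsmall δ hδ) (isBoundedUnder_of_eventually_ge (.of_forall ha))

theorem ginger_convergence_general (d : ℕ)
    (L : EuclideanSpace ℝ (Fin d) → ℝ) (hL : Differentiable ℝ L)
    (hbdd : BddBelow (Set.range L))
    (ℓ : ℝ) (hℓ : 0 < ℓ)
    (hLip : ∀ θ₁ θ₂ : EuclideanSpace ℝ (Fin d),
      ‖gradient L θ₁ - gradient L θ₂‖ ≤ ℓ * ‖θ₁ - θ₂‖)
    (γ Mg ε : ℝ) (hγ : 0 < γ) (hε : 0 < ε)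
    (η : ℕ → ℝ) (hη : ∀ t, 0 < η t)
    (hdiv : Tendsto (fun T => ∑ t ∈ Finset.range T, η t) atTop atTop)
    (hsq : Summable fun t => η t ^ 2)
    (G : ℕ → Matrix (Fin d) (Fin d) ℝ) (hG : ∀ t, (G t).PosDef)
    (hmin : ∀ t, ε ≤ ⨅ i, (hG t).inv.1.eigenvalues i)
    (hmax : ∀ t, (⨆ i, (hG t).inv.1.eigenvalues i) ≤ γ⁻¹)
    (θ : ℕ → EuclideanSpace ℝ (Fin d))
    (hstep : ∀ t, θ (t + 1) = θ t - η t • Matrix.toEuclideanLin (G t)⁻¹ (gradient L (θ t)))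
    (hgrad : ∀ t, ‖gradient L (θ t)‖ ≤ Mg) :
    liminf (fun t => ‖gradient L (θ t)‖ ^ 2) atTop = 0 := by
  have hdescent : ∀ t, L (θ (t + 1)) ≤
      L (θ t) - ε * (η t * ‖gradient L (θ t)‖ ^ 2) + ℓ * (γ⁻¹ * Mg) ^ 2 * η t ^ 2 := by
    intro t
    have hGinv := (hG t).inv
    have hlow : ∀ i, ε ≤ hGinv.1.eigenvalues i := fun i =>
      (hmin t).trans (ciInf_le (Set.finite_range _).bddBelow i)
    have hup : ∀ i, |hGinv.1.eigenvalues i| ≤ γ⁻¹ := fun i => by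
      rw [abs_of_pos (hGinv.eigenvalues_pos i)]
      exact (le_ciSup (Set.finite_range _).bddAbove i).trans (hmax t)
    rw [hstep t]
    refine apply_sub_smul_le_of_inner_gradient_ge hL hℓ.le hLip (hη t).le
      (hGinv.1.mul_norm_sq_le_inner_toEuclideanLin hlow _) ?_
    exact (hGinv.1.norm_toEuclideanLin_le (by positivity) hup _).trans
      (mul_le_mul_of_nonneg_left (hgrad t) (by positivity))
  have hsummable : Summable fun t => η t * ‖gradient L (θ t)‖ ^ 2 :=
    (summable_mul_left_iff hε.ne').mp <|
      summable_of_le_sub_add (hbdd.mono (Set.range_comp_subset_range θ L))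
        (fun t => by have := hη t; positivity) (fun t => by positivity) (hsq.mul_left _) hdescent
  exact liminf_eq_zero_of_summable_mul (fun t => (hη t).le)
    ((not_summable_iff_tendsto_nat_atTop_of_nonneg fun t => (hη t).le).mpr hdiv)
    (fun t => by positivity) hsummable

/-- Theorem 1 (deterministic form): convergence of Ginger-style preconditioned
gradient descent on possibly non-convex objectives under Robbins–Monro step
sizes and uniformly bounded preconditioner spectra:
`lim inf_{t→∞} ‖∇L(θ_t)‖² = 0`. -/
theorem ginger_convergence (d : ℕ)
    (L : EuclideanSpace ℝ (Fin d) → ℝ) (hL : Differentiable ℝ L)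
    (hbdd : BddBelow (Set.range L))
    (ℓ : ℝ) (hℓ : 0 < ℓ)
    (hLip : ∀ θ₁ θ₂ : EuclideanSpace ℝ (Fin d),
      ‖gradient L θ₁ - gradient L θ₂‖ ≤ ℓ * ‖θ₁ - θ₂‖)
    (γ Mg ε : ℝ) (hγ : 0 < γ) (hMg : 0 < Mg) (hε : 0 < ε)
    (η : ℕ → ℝ) (hη : ∀ t, 0 < η t)
    (hdiv : Tendsto (fun T => ∑ t ∈ Finset.range T, η t) atTop atTop)
    (hsq : Summable fun t => η t ^ 2)
    (G : ℕ → Matrix (Fin d) (Fin d) ℝ) (hG : ∀ t, (G t).PosDef)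
    (hmin : ∀ t, ε ≤ ⨅ i, (hG t).inv.1.eigenvalues i)
    (hmax : ∀ t, (⨆ i, (hG t).inv.1.eigenvalues i) ≤ γ⁻¹)
    (θ : ℕ → EuclideanSpace ℝ (Fin d))
    (hstep : ∀ t, θ (t + 1) = θ t - η t • Matrix.toEuclideanLin (G t)⁻¹ (gradient L (θ t)))
    (hgrad : ∀ t, ‖gradient L (θ t)‖ ≤ Mg) :
    liminf (fun t => ‖gradient L (θ t)‖ ^ 2) atTop = 0 :=
  ginger_convergence_general d L hL hbdd ℓ hℓ hLip γ Mg ε hγ hε η hη hdiv hsq G hG hmin hmax θ hstep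
    hgrad
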